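/- arXiv:2012.07249 — 2 statements merged into one kernel-verified Lean document; each statement's English description precedes it below -/
import Mathlib

section
/- For every integer n ≥ 0 and every real number x, Σ_{k=0}^{n} W_{m,r}[n,k]_q · ∏_{i=0}^{k−1} q^{−(r+im)}(x − [r+im]_q) = x^n. (With x = [t]_q this is the horizontal generating function Σ_{k=0}^{n} W_{m,r}[n,k]_q [t−r|m]_{k,q} = [t]_q^n, where [t−r|m]_{k,q} = ∏_{i=0}^{k−1}[t−r−im]_q is the q-falling factorial.) -/
open Finset

/-- The `q`-integer `[s]_q = (q^s - 1)/(q - 1)` for an integer `s`. -/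
noncomputable def qint (q : ℝ) (s : ℤ) : ℝ := (q ^ s - 1) / (q - 1)

/-- The `(q,r)`-Whitney numbers of the second kind `W_{m,r}[n,k]_q`, with `r : ℤ` so
that both `W_{m,r}` and `W_{m,-r}` are covered: `W[0,0] = 1`, `W[n,k] = 0` for `k > n`,
and `W[n,k] = q^(m(k-1)+r) W[n-1,k-1] + [mk+r]_q W[n-1,k]`. -/
noncomputable def qWhitney2 (q : ℝ) (m : ℕ) (r : ℤ) : ℕ → ℕ → ℝ
  | 0, 0 => 1
  | 0, _ + 1 => 0
  | n + 1, 0 => qint q r * qWhitney2 q m r n 0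
  | n + 1, k + 1 =>
      q ^ (m * k + r) * qWhitney2 q m r n k
        + qint q (m * (k + 1) + r) * qWhitney2 q m r n (k + 1)

/-!
The polynomials `P_k(x) = ∏_{i<k} q^{-(r+im)} (x - [r+im]_q)` satisfy
`x P_k = [mk+r]_q P_k + q^{mk+r} P_{k+1}`, which is exactly the shape of the recurrence for
`W_{m,r}[n,k]_q`. Multiplying `x^n = ∑_k W[n,k] P_k` by `x` and regrouping therefore gives the
identity for `n + 1`.
-/

/-- At `x = [t]_q` this is the `q`-falling factorial `[t-r|m]_{k,q} = ∏_{i<k} [t-r-im]_q`. -/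
noncomputable def qFallingBasis (q : ℝ) (m : ℕ) (r : ℤ) (x : ℝ) (k : ℕ) : ℝ :=
  ∏ i ∈ range k, q ^ (-(r + i * m)) * (x - qint q (r + i * m))

section

variable {q : ℝ} {m : ℕ} {r : ℤ}

theorem qWhitney2_eq_zero_of_lt {n k : ℕ} (h : n < k) : qWhitney2 q m r n k = 0 := by
  induction n generalizing k with
  | zero => obtain ⟨k, rfl⟩ := Nat.exists_eq_add_one_of_ne_zero h.ne'; rfl
  | succ n ih =>
    obtain ⟨k, rfl⟩ := Nat.exists_eq_add_one_of_ne_zero (by omega : k ≠ 0)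
    simp [qWhitney2, ih (k := k) (by omega), ih (k := k + 1) (by omega)]

theorem qFallingBasis_succ (x : ℝ) (k : ℕ) :
    qFallingBasis q m r x (k + 1) =
      qFallingBasis q m r x k * (q ^ (-(r + k * m)) * (x - qint q (r + k * m))) :=
  prod_range_succ _ k

theorem mul_qFallingBasis (hq : q ≠ 0) (x : ℝ) (k : ℕ) :
    x * qFallingBasis q m r x k =
      qint q (m * k + r) * qFallingBasis q m r x k
        + q ^ (m * k + r) * qFallingBasis q m r x (k + 1) := by
  rw [qFallingBasis_succ, show (m : ℤ) * k + r = r + k * m by ring, zpow_neg]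
  field_simp
  rw [add_sub_cancel, mul_comm]

theorem sum_qWhitney2_succ_mul (f : ℕ → ℝ) (n N : ℕ) :
    ∑ k ∈ range (N + 1), qWhitney2 q m r (n + 1) k * f k =
      ∑ k ∈ range (N + 1), qint q (m * k + r) * qWhitney2 q m r n k * f k
        + ∑ k ∈ range N, q ^ (m * k + r) * qWhitney2 q m r n k * f (k + 1) := by
  rw [sum_range_succ', sum_range_succ' (fun k => qint q (m * k + r) * _ * f k)]
  simp only [qWhitney2, Nat.cast_zero, Nat.cast_succ, mul_zero, zero_add, add_mul, sum_add_distrib]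
  ring

theorem sum_qWhitney2_mul_qFallingBasis (hq : q ≠ 0) (n : ℕ) (x : ℝ) :
    ∑ k ∈ range (n + 1), qWhitney2 q m r n k * qFallingBasis q m r x k = x ^ n := by
  induction n with
  | zero => simp [qWhitney2, qFallingBasis]
  | succ n ih =>
    rw [sum_qWhitney2_succ_mul, sum_range_succ _ (n + 1), qWhitney2_eq_zero_of_lt n.lt_succ_self,
      pow_succ', ← ih, mul_sum]
    simp only [mul_zero, zero_mul, add_zero, ← sum_add_distrib]
    refine sum_congr rfl fun k _ => ?_
    rw [mul_left_comm, mul_qFallingBasis hq]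
    ring

end

theorem qWhitney2_horizontal_generating_function_general (q : ℝ) (hq : 0 < q) (m r : ℕ)
    (n : ℕ) (x : ℝ) :
    ∑ k ∈ Finset.range (n + 1),
        qWhitney2 q m (r : ℤ) n k *
          ∏ i ∈ Finset.range k, (q ^ (-((r : ℤ) + i * m)) * (x - qint q ((r : ℤ) + i * m))) =
      x ^ n :=
  sum_qWhitney2_mul_qFallingBasis hq.ne' n x

theorem qWhitney2_horizontal_generating_function (q : ℝ) (hq : 0 < q) (hq1 : q ≠ 1) (m r : ℕ) (hm : 0 < m) (hr : 0 < r)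
    (n : ℕ) (x : ℝ) :
    ∑ k ∈ Finset.range (n + 1),
        qWhitney2 q m (r : ℤ) n k *
          ∏ i ∈ Finset.range k, (q ^ (-((r : ℤ) + i * m)) * (x - qint q ((r : ℤ) + i * m))) =
      x ^ n :=
  qWhitney2_horizontal_generating_function_general q hq m r n x
end

section
/- For all integers n ≥ k ≥ 0, the (q,r)-Whitney numbers of the second kind have the explicit formula W_{m,r}[n,k]_q = (1/([k]_{q^m}! · [m]_q^k)) · Σ_{j=0}^{k} (−1)^{k−j} q^{m·binom(k−j,2)} [k choose j]_{q^m} · ([jm+r]_q)^n. -/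
/-! Clear the denominator and induct on `n`. The right-hand side satisfies the recurrence
of `W`: writing `[jm+r]_q = [m(k+1)+r]_q - q^(jm+r) [m]_q [k+1-j]_(q^m)` and absorbing
`[k+1-j]_(q^m)` into the `q^m`-binomial coefficient splits each summand into the two terms
of the recurrence. The initial values agree because `∑ⱼ (-1)^(k-j) Q^C(k-j,2) [k choose j]_Q`
vanishes for `k ≥ 1`: by `q`-Pascal it telescopes. -/

open Finset

/-- The `q`-factorial `[n]_q! = ∏_{i=1}^n [i]_q`. -/
noncomputable def qfact (q : ℝ) : ℕ → ℝ
  | 0 => 1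
  | n + 1 => qfact q n * qint q (n + 1)

/-- The `q`-binomial coefficient `[k choose j]_q`. -/
noncomputable def qbinom (q : ℝ) (k j : ℕ) : ℝ := qfact q k / (qfact q j * qfact q (k - j))

section

variable {q : ℝ}

theorem qint_add (hq0 : q ≠ 0) (hq1 : q ≠ 1) (a b : ℤ) :
    qint q (a + b) = qint q a + q ^ a * qint q b := by
  have : q - 1 ≠ 0 := sub_ne_zero.2 hq1
  simp only [qint, zpow_add₀ hq0]
  field_simp
  ring

theorem qint_natCast_mul {m : ℕ} (hq1 : q ≠ 1) (hqm : q ^ m ≠ 1) (d : ℤ) :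
    qint q (m * d) = qint q m * qint (q ^ m) d := by
  have : q - 1 ≠ 0 := sub_ne_zero.2 hq1
  have : q ^ m - 1 ≠ 0 := sub_ne_zero.2 hqm
  simp only [qint, zpow_mul, zpow_natCast]
  field_simp

theorem qint_ne_zero (hq : 0 < q) (hq1 : q ≠ 1) {s : ℤ} (hs : s ≠ 0) : qint q s ≠ 0 :=
  div_ne_zero (sub_ne_zero.2 (mt (zpow_eq_one_iff_right₀ hq.le hq1).1 hs)) (sub_ne_zero.2 hq1)

theorem qfact_ne_zero (hq : 0 < q) (hq1 : q ≠ 1) : ∀ k, qfact q k ≠ 0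
  | 0 => one_ne_zero
  | k + 1 => mul_ne_zero (qfact_ne_zero hq hq1 k) (qint_ne_zero hq hq1 (by omega))

theorem qbinom_zero_right (hq : 0 < q) (hq1 : q ≠ 1) (k : ℕ) : qbinom q k 0 = 1 := by
  simp [qbinom, qfact, qfact_ne_zero hq hq1]

theorem qbinom_self (hq : 0 < q) (hq1 : q ≠ 1) (k : ℕ) : qbinom q k k = 1 := by
  simp [qbinom, qfact, qfact_ne_zero hq hq1]

theorem qbinom_succ_succ (hq : 0 < q) (hq1 : q ≠ 1) {i k : ℕ} (hik : i < k) :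
    qbinom q (k + 1) (i + 1) = q ^ (k - i) * qbinom q k i + qbinom q k (i + 1) := by
  obtain ⟨d, rfl⟩ := Nat.exists_eq_add_of_lt hik
  have hsplit : qint q ((i + d + 1 : ℕ) + 1) = qint q (d + 1) + q ^ (d + 1) * qint q (i + 1) := by
    rw [show ((i + d + 1 : ℕ) : ℤ) + 1 = (d + 1) + (i + 1) by push_cast; ring,
      qint_add hq.ne' hq1]
    norm_cast
  have hi := qint_ne_zero hq hq1 (s := i + 1) (by omega)
  have hd := qint_ne_zero hq hq1 (s := d + 1) (by omega)
  have := qfact_ne_zero hq hq1 i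
  have := qfact_ne_zero hq hq1 d
  simp only [qbinom]
  rw [show i + d + 1 + 1 - (i + 1) = d + 1 by omega, show i + d + 1 - i = d + 1 by omega,
    show i + d + 1 - (i + 1) = d by omega]
  simp only [qfact, hsplit]
  push_cast at hi hd ⊢
  field_simp
  ring

theorem qbinom_succ_mul_qint (hq : 0 < q) (hq1 : q ≠ 1) {j k : ℕ} (hjk : j ≤ k) :
    qbinom q (k + 1) j * qint q ((k - j : ℕ) + 1) = qint q (k + 1) * qbinom q k j := by
  obtain ⟨d, rfl⟩ := Nat.exists_eq_add_of_le hjk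
  have hd := qint_ne_zero hq hq1 (s := d + 1) (by omega)
  have := qfact_ne_zero hq hq1 j
  have := qfact_ne_zero hq hq1 d
  simp only [qbinom]
  rw [show j + d + 1 - j = d + 1 by omega, Nat.add_sub_cancel_left]
  simp only [qfact]
  push_cast at hd ⊢
  field_simp

end

theorem sum_range_neg_one_pow_mul_qbinom {q : ℝ} (hq : 0 < q) (hq1 : q ≠ 1) (k : ℕ) :
    ∑ j ∈ range (k + 2),
      (-1 : ℝ) ^ (k + 1 - j) * q ^ (k + 1 - j).choose 2 * qbinom q (k + 1) j = 0 := by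
  set a : ℕ → ℝ := fun i ↦ (-1) ^ (k - i) * q ^ (k + 1 - i).choose 2 * qbinom q k i
  have htelescope : ∀ i < k, (-1 : ℝ) ^ (k + 1 - (i + 1)) * q ^ (k + 1 - (i + 1)).choose 2
      * qbinom q (k + 1) (i + 1) = a i - a (i + 1) := by
    intro i hi
    rw [qbinom_succ_succ hq hq1 hi]
    obtain ⟨d, rfl⟩ := Nat.exists_eq_add_of_lt hi
    simp only [a]
    rw [show i + d + 1 + 1 - (i + 1) = d + 1 by omega, show i + d + 1 - i = d + 1 by omega,
      show i + d + 1 - (i + 1) = d by omega, show i + d + 1 + 1 - i = d + 1 + 1 by omega,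
      Nat.choose_succ_succ' (d + 1), Nat.choose_one_right]
    ring
  rw [sum_range_succ, sum_range_succ', sum_congr rfl fun i hi ↦ htelescope i (mem_range.1 hi),
    sum_range_sub']
  simp [a, qbinom_zero_right hq hq1, qbinom_self hq hq1]
  ring

noncomputable def qWhitney2Term (q : ℝ) (m : ℕ) (r : ℤ) (n k j : ℕ) : ℝ :=
  (-1 : ℝ) ^ (k - j) * q ^ (m * Nat.choose (k - j) 2) * qbinom (q ^ m) k j *
    qint q (j * m + r) ^ n

noncomputable def qWhitney2Sum (q : ℝ) (m : ℕ) (r : ℤ) (n k : ℕ) : ℝ :=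
  ∑ j ∈ range (k + 1), qWhitney2Term q m r n k j

section

variable {q : ℝ} {m : ℕ} (r : ℤ)

theorem qWhitney2Sum_zero_right (n : ℕ) : qWhitney2Sum q m r n 0 = qint q r ^ n := by
  simp [qWhitney2Sum, qWhitney2Term, qbinom, qfact]

theorem qWhitney2Sum_zero_succ (hq : 0 < q) (hq1 : q ≠ 1) (hm : m ≠ 0) (k : ℕ) :
    qWhitney2Sum q m r 0 (k + 1) = 0 := by
  simp only [qWhitney2Sum, qWhitney2Term, pow_zero, mul_one, pow_mul]
  exact sum_range_neg_one_pow_mul_qbinom (pow_pos hq m)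
    ((pow_eq_one_iff_of_nonneg hq.le hm).not.2 hq1) k

theorem qWhitney2Term_succ_succ (hq : 0 < q) (hq1 : q ≠ 1) (hm : m ≠ 0) (n : ℕ) {j k : ℕ}
    (hj : j ≤ k) :
    qWhitney2Term q m r (n + 1) (k + 1) j
      = q ^ (m * k + r) * qint q m * qint (q ^ m) (k + 1) * qWhitney2Term q m r n k j
        + qint q (m * (k + 1) + r) * qWhitney2Term q m r n (k + 1) j := by
  have hqm : q ^ m ≠ 1 := (pow_eq_one_iff_of_nonneg hq.le hm).not.2 hq1
  have hsplit : qint q (m * (k + 1) + r)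
      = qint q (j * m + r)
        + q ^ ((j : ℤ) * m + r) * (qint q m * qint (q ^ m) ((k - j : ℕ) + 1)) := by
    rw [← qint_natCast_mul hq1 hqm, ← qint_add hq.ne' hq1]
    congr 1
    push_cast [hj]
    ring
  have habsorb := qbinom_succ_mul_qint (pow_pos hq m) hqm hj
  have hpow : q ^ (m * (k + 1 - j).choose 2) * q ^ ((j : ℤ) * m + r)
      = q ^ (m * (k - j).choose 2) * q ^ ((m : ℤ) * k + r) := by
    rw [show k + 1 - j = k - j + 1 by omega, Nat.choose_succ_succ', Nat.choose_one_right,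
      ← zpow_natCast, ← zpow_natCast, ← zpow_add₀ hq.ne', ← zpow_add₀ hq.ne']
    congr 1
    push_cast [hj]
    ring
  simp only [qWhitney2Term]
  rw [show k + 1 - j = k - j + 1 by omega] at hpow ⊢
  linear_combination
    (-1 : ℝ) ^ (k - j) * qint q (j * m + r) ^ n * q ^ (m * (k - j + 1).choose 2)
      * (qbinom (q ^ m) (k + 1) j * hsplit + qint q m * q ^ ((j : ℤ) * m + r) * habsorb)
    + (-1 : ℝ) ^ (k - j) * qint q (j * m + r) ^ n * qint q m * qint (q ^ m) (k + 1)
      * qbinom (q ^ m) k j * hpow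

theorem qWhitney2Sum_succ_succ (hq : 0 < q) (hq1 : q ≠ 1) (hm : m ≠ 0) (n k : ℕ) :
    qWhitney2Sum q m r (n + 1) (k + 1)
      = q ^ (m * k + r) * qint q m * qint (q ^ m) (k + 1) * qWhitney2Sum q m r n k
        + qint q (m * (k + 1) + r) * qWhitney2Sum q m r n (k + 1) := by
  have hlast : ((k + 1 : ℕ) : ℤ) * m + r = m * (k + 1) + r := by push_cast; ring
  simp only [qWhitney2Sum]
  rw [sum_range_succ _ (k + 1), sum_range_succ _ (k + 1),
    sum_congr rfl fun j hj ↦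
      qWhitney2Term_succ_succ r hq hq1 hm n (Nat.lt_succ_iff.1 (mem_range.1 hj)),
    sum_add_distrib, ← mul_sum, ← mul_sum]
  simp only [qWhitney2Term, Nat.sub_self, hlast]
  ring

theorem qfact_mul_qint_pow_mul_qWhitney2 (hq : 0 < q) (hq1 : q ≠ 1) (hm : m ≠ 0) (n k : ℕ) :
    qfact (q ^ m) k * qint q m ^ k * qWhitney2 q m r n k = qWhitney2Sum q m r n k := by
  induction n generalizing k with
  | zero =>
    cases k with
    | zero => simp [qWhitney2, qfact, qWhitney2Sum_zero_right]
    | succ k => simp [qWhitney2, qWhitney2Sum_zero_succ r hq hq1 hm]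
  | succ n ih =>
    cases k with
    | zero =>
      have h0 := ih 0
      simp only [qfact, pow_zero, one_mul, qWhitney2Sum_zero_right] at h0 ⊢
      rw [qWhitney2, h0, pow_succ, mul_comm]
    | succ k =>
      rw [qWhitney2Sum_succ_succ r hq hq1 hm, ← ih k, ← ih (k + 1), qWhitney2, qfact]
      ring

end

theorem qWhitney2_explicit_formula_general (q : ℝ) (hq : 0 < q) (hq1 : q ≠ 1) (m r : ℕ) (hm : 0 < m)
    (n k : ℕ) :
    qWhitney2 q m (r : ℤ) n k =
      1 / (qfact (q ^ m) k * (qint q m) ^ k) *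
        ∑ j ∈ Finset.range (k + 1),
          (-1 : ℝ) ^ (k - j) * q ^ (m * Nat.choose (k - j) 2) * qbinom (q ^ m) k j *
            qint q (j * m + r) ^ n := by
  have hqm : q ^ m ≠ 1 := (pow_eq_one_iff_of_nonneg hq.le hm.ne').not.2 hq1
  have hD : qfact (q ^ m) k * qint q m ^ k ≠ 0 :=
    mul_ne_zero (qfact_ne_zero (pow_pos hq m) hqm k)
      (pow_ne_zero k (qint_ne_zero hq hq1 (by exact_mod_cast hm.ne')))
  rw [one_div, eq_inv_mul_iff_mul_eq₀ hD]
  exact qfact_mul_qint_pow_mul_qWhitney2 r hq hq1 hm.ne' n k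

theorem qWhitney2_explicit_formula (q : ℝ) (hq : 0 < q) (hq1 : q ≠ 1) (m r : ℕ) (hm : 0 < m) (hr : 0 < r)
    (n k : ℕ) (hkn : k ≤ n) :
    qWhitney2 q m (r : ℤ) n k =
      1 / (qfact (q ^ m) k * (qint q m) ^ k) *
        ∑ j ∈ Finset.range (k + 1),
          (-1 : ℝ) ^ (k - j) * q ^ (m * Nat.choose (k - j) 2) * qbinom (q ^ m) k j *
            qint q (j * m + r) ^ n :=
  qWhitney2_explicit_formula_general q hq hq1 m r hm n k
end
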